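/- For 0 < q < 1 and any integer m ≥ 1, the total backward jump rate satisfies ∑_{j'=0}^{m-1} ψ•_{q,0}(j'|m) = m, where ψ•_{q,0}(j'|m) = 1/(1-q^{m-j'}) · (q;q)_m/(q;q)_{j'}. -/

import Mathlib

open Finset

/-- The q-Pochhammer symbol `(x;q)_k = ∏_{i=0}^{k-1} (1 - q^i x)`. -/
noncomputable def qPoch (q x : ℝ) (k : ℕ) : ℝ := ∏ i ∈ Finset.range k, (1 - q ^ i * x)

/-- The rate `ψ•_{q,ν}(j'|m) = 1/(1-q^{m-j'}) · (q;q)_m (ν;q)_{j'}/((q;q)_{j'} (ν;q)_m)`;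
at `ν = 0` this is `1/(1-q^{m-j'}) · (q;q)_m/(q;q)_{j'}`. -/
noncomputable def qHahnPsiDot (q ν : ℝ) (j m : ℕ) : ℝ :=
  1 / (1 - q ^ (m - j)) * (qPoch q q m * qPoch q ν j) / (qPoch q q j * qPoch q ν m)

/-!
Write `P k = (q;q)_k`, so that `ψ•_{q,0}(j|m) = P m / (P j (1 - q^{m-j}))`. From
`P (k+1) = P k (1 - q^{k+1})` one gets, for `j < m`,
`ψ•(j+1|m+1) = ψ•(j|m) + q^{j+1} P m / P (j+1)`, and `ψ•(0|m+1) = P m`.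
Hence the total rate for `m + 1` exceeds the one for `m` by `∑_{k=0}^{m} q^k P m / P k`,
which telescopes to `1`.
-/

theorem qPoch_zero (q x : ℝ) : qPoch q x 0 = 1 :=
  prod_range_zero _

theorem qPoch_succ (q x : ℝ) (k : ℕ) : qPoch q x (k + 1) = qPoch q x k * (1 - q ^ k * x) :=
  prod_range_succ _ k

theorem qPoch_self_succ (q : ℝ) (k : ℕ) :
    qPoch q q (k + 1) = qPoch q q k * (1 - q ^ (k + 1)) := by
  rw [qPoch_succ, pow_succ]

theorem qHahnPsiDot_zero (q : ℝ) (j m : ℕ) :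
    qHahnPsiDot q 0 j m = qPoch q q m / (qPoch q q j * (1 - q ^ (m - j))) := by
  have hν : qPoch q 0 = fun _ => 1 := by
    ext k
    simp [qPoch]
  rw [qHahnPsiDot, hν, mul_one, mul_one, div_mul_eq_mul_div, one_mul, div_div, mul_comm]

section

variable {q : ℝ}

theorem qPoch_self_ne_zero (hq : ∀ n : ℕ, q ^ (n + 1) ≠ 1) (k : ℕ) : qPoch q q k ≠ 0 :=
  prod_ne_zero_iff.mpr fun i _ => by
    rw [← pow_succ]
    exact sub_ne_zero.mpr (hq i).symm

theorem sum_range_pow_mul_qPoch_div (hq : ∀ n : ℕ, q ^ (n + 1) ≠ 1) (m : ℕ) :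
    ∑ k ∈ range (m + 1), q ^ k * (qPoch q q m / qPoch q q k) = 1 := by
  induction m with
  | zero => simp [qPoch_zero]
  | succ m ih =>
    have hterm : ∀ k ∈ range (m + 1), q ^ k * (qPoch q q (m + 1) / qPoch q q k)
        = (1 - q ^ (m + 1)) * (q ^ k * (qPoch q q m / qPoch q q k)) := by
      intro k _
      rw [qPoch_self_succ]
      ring
    rw [sum_range_succ, sum_congr rfl hterm, ← mul_sum, ih,
      div_self (qPoch_self_ne_zero hq (m + 1))]
    ring

theorem qHahnPsiDot_zero_zero_succ (hq : ∀ n : ℕ, q ^ (n + 1) ≠ 1) (m : ℕ) :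
    qHahnPsiDot q 0 0 (m + 1) = qPoch q q m := by
  have hm : 1 - q ^ (m + 1) ≠ 0 := sub_ne_zero.mpr (hq m).symm
  rw [qHahnPsiDot_zero, qPoch_self_succ, Nat.sub_zero, qPoch_zero, one_mul,
    mul_div_cancel_right₀ _ hm]

theorem qHahnPsiDot_zero_succ_succ (hq : ∀ n : ℕ, q ^ (n + 1) ≠ 1) {j m : ℕ} (hjm : j < m) :
    qHahnPsiDot q 0 (j + 1) (m + 1)
      = qHahnPsiDot q 0 j m + q ^ (j + 1) * (qPoch q q m / qPoch q q (j + 1)) := by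
  obtain ⟨d, rfl⟩ : ∃ d, m = j + d + 1 := ⟨m - j - 1, by omega⟩
  have hgap : j + d + 1 + 1 - (j + 1) = d + 1 := by omega
  have hgap' : j + d + 1 - j = d + 1 := by omega
  have hd : 1 - q ^ (d + 1) ≠ 0 := sub_ne_zero.mpr (hq d).symm
  have hj : 1 - q ^ (j + 1) ≠ 0 := sub_ne_zero.mpr (hq j).symm
  have hPj := qPoch_self_ne_zero hq j
  simp only [qHahnPsiDot_zero, hgap, hgap', qPoch_self_succ q (j + d + 1), qPoch_self_succ q j]
  field_simp
  ring

theorem sum_range_succ_qHahnPsiDot_zero (hq : ∀ n : ℕ, q ^ (n + 1) ≠ 1) (m : ℕ) :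
    ∑ j ∈ range (m + 1), qHahnPsiDot q 0 j (m + 1)
      = ∑ j ∈ range m, qHahnPsiDot q 0 j m + 1 := by
  have hshift : ∀ j ∈ range m, qHahnPsiDot q 0 (j + 1) (m + 1)
      = qHahnPsiDot q 0 j m + q ^ (j + 1) * (qPoch q q m / qPoch q q (j + 1)) :=
    fun j hj => qHahnPsiDot_zero_succ_succ hq (mem_range.mp hj)
  have htele := sum_range_pow_mul_qPoch_div hq m
  rw [sum_range_succ', qPoch_zero, div_one, pow_zero, one_mul] at htele
  rw [sum_range_succ', sum_congr rfl hshift, sum_add_distrib, qHahnPsiDot_zero_zero_succ hq,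
    ← htele]
  ring

end

theorem qHahnPsiDot_total_rate_general (q : ℝ) (hq0 : 0 < q) (hq1 : q < 1) (m : ℕ) :
    ∑ j ∈ Finset.range m, qHahnPsiDot q 0 j m = (m : ℝ) := by
  have hq : ∀ n : ℕ, q ^ (n + 1) ≠ 1 := fun n => (pow_lt_one₀ hq0.le hq1 n.succ_ne_zero).ne
  induction m with
  | zero => simp
  | succ m ih => rw [sum_range_succ_qHahnPsiDot_zero hq, ih, Nat.cast_succ]

/-- The total backward q-TASEP jump rate: `∑_{j'=0}^{m-1} ψ•_{q,0}(j'|m) = m`. -/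
theorem qHahnPsiDot_total_rate (q : ℝ) (hq0 : 0 < q) (hq1 : q < 1) (m : ℕ) (hm : 1 ≤ m) :
    ∑ j ∈ Finset.range m, qHahnPsiDot q 0 j m = (m : ℝ) :=
  qHahnPsiDot_total_rate_general q hq0 hq1 m
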